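/- arXiv:2106.14872 — 2 statements merged into one kernel-verified Lean document; each statement's English description precedes it below -/
import Mathlib

section
/- Chaoticity of the inverse: Let X be a (real or complex) infinite-dimensional separable Banach space and let A be a densely defined linear operator in X such that every power A^n (n ∈ ℕ) is a closed operator, and suppose there exist a set Y ⊆ C^∞(A) dense in X and a mapping B : Y → Y such that (1) ABf = f for every f ∈ Y and (2) for every f ∈ Y there exist α = α(f) ∈ (0,1) and c = c(f,α) > 0 with max(‖A^n f‖, ‖B^n f‖) ≤ c·α^n for all n ∈ ℕ. If A is injective, has range R(A) = X, and its inverse A^{-1} is a bounded linear operator on X, then A^{-1} is chaotic. -/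
open Filter Topology TopologicalSpace

/-- The domain of the `n`-th power of the operator `A` with domain `D`:
`x ∈ D(Aⁿ)` iff `Aᵏx ∈ D(A)` for all `k < n`. -/
def opDom {X : Type*} (A : X → X) (D : Set X) (n : ℕ) : Set X :=
  {x | ∀ k < n, A^[k] x ∈ D}

/-- `C^∞(A) = ⋂ₙ D(Aⁿ)`. -/
def opCinf {X : Type*} (A : X → X) (D : Set X) : Set X :=
  {x | ∀ k : ℕ, A^[k] x ∈ D}

/-- `A` is linear on the subspace `D`. -/
def IsLinearOn (𝕜 : Type*) {X : Type*} [RCLike 𝕜] [NormedAddCommGroup X]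
    [NormedSpace 𝕜 X] (A : X → X) (D : Set X) : Prop :=
  (∀ x ∈ D, ∀ y ∈ D, A (x + y) = A x + A y) ∧
  (∀ (c : 𝕜), ∀ x ∈ D, A (c • x) = c • A x)

/-- The `n`-th power of `A` (with domain `D`) is a closed operator:
its graph is closed in `X × X`. -/
def ClosedPower {X : Type*} [NormedAddCommGroup X] (A : X → X) (D : Set X)
    (n : ℕ) : Prop :=
  IsClosed {p : X × X | p.1 ∈ opDom A D n ∧ p.2 = A^[n] p.1}

/-- A hypercyclic vector for `A`: a nonzero `f ∈ C^∞(A)` with dense orbit. -/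
def HypercyclicVec {X : Type*} [NormedAddCommGroup X] (A : X → X) (D : Set X)
    (f : X) : Prop :=
  f ∈ opCinf A D ∧ f ≠ 0 ∧ Dense (Set.range fun n : ℕ => A^[n] f)

/-- `A` (with domain `D`) is hypercyclic. -/
def HypercyclicOp {X : Type*} [NormedAddCommGroup X] (A : X → X) (D : Set X) :
    Prop :=
  ∃ f, HypercyclicVec A D f

/-- `f` is a periodic point of `A`: `f ∈ D(A^N)` and `A^N f = f` for some `N ≥ 1`. -/
def PeriodicPt {X : Type*} (A : X → X) (D : Set X) (f : X) : Prop :=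
  ∃ N : ℕ, 0 < N ∧ f ∈ opDom A D N ∧ A^[N] f = f

/-- `A` (with domain `D`) is chaotic: hypercyclic with a dense set of periodic
points. -/
def ChaoticOp {X : Type*} [NormedAddCommGroup X] (A : X → X) (D : Set X) : Prop :=
  HypercyclicOp A D ∧ Dense {f | PeriodicPt A D f}

/-! For `f ∈ Y` the bounded operator `T = A⁻¹` agrees with `B` along the `B`-orbit and undoes `A`
along the `A`-orbit, so `Tⁿ f` and `Aⁿ f` both decay geometrically. Hence `f + Aⁿ g` is close to
`f` while `Tⁿ (f + Aⁿ g) = Tⁿ f + g` is close to `g` (the Kitai–Gethner–Shapiro argument), so `T`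
is topologically transitive, and Birkhoff's transitivity theorem (a Baire category argument)
gives a dense set of vectors with dense orbit. For the periodic points, the series
`∑ⱼ A^{jN} f + ∑ⱼ T^{(j+1)N} f` is fixed by `T^N`, and it tends to `f` as `N → ∞`. -/

open Set Function

theorem Set.EqOn.iterate {α : Type*} {f g : α → α} {s : Set α} (h : EqOn f g s)
    (hg : MapsTo g s s) (n : ℕ) : EqOn f^[n] g^[n] s := by
  induction n with
  | zero => exact fun _ _ => rfl
  | succ n ih =>
    intro x hx
    rw [iterate_succ_apply', iterate_succ_apply', ih hx, h (hg.iterate n hx)]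

theorem iterate_iterate_add_of_apply_iterate_succ {α : Type*} {T S : α → α} {f : α}
    (hTS : ∀ k, T (S^[k + 1] f) = S^[k] f) (m n : ℕ) : T^[n] (S^[n + m] f) = S^[m] f := by
  induction n with
  | zero => simp
  | succ n ih => rw [iterate_succ_apply, add_right_comm, hTS, ih]

theorem tendsto_zero_of_norm_le_mul_pow {E : Type*} [SeminormedAddCommGroup E] {u : ℕ → E}
    {c α : ℝ} (hα0 : 0 ≤ α) (hα1 : α < 1) (hu : ∀ n, 0 < n → ‖u n‖ ≤ c * α ^ n) :
    Tendsto u atTop (𝓝 0) :=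
  squeeze_zero_norm' ((eventually_gt_atTop 0).mono hu)
    (by simpa using (tendsto_pow_atTop_nhds_zero_of_lt_one hα0 hα1).const_mul c)

section Transitivity

variable {X : Type*} [TopologicalSpace X]

def IsTopologicallyTransitive (T : X → X) : Prop :=
  ∀ U V : Set X, IsOpen U → IsOpen V → U.Nonempty → V.Nonempty →
    ∃ n : ℕ, (U ∩ T^[n] ⁻¹' V).Nonempty

theorem IsTopologicallyTransitive.dense_setOf_dense_range_iterate [BaireSpace X]
    [SecondCountableTopology X] {T : X → X} (hT : IsTopologicallyTransitive T)
    (hcont : Continuous T) : Dense {x | Dense (range fun n : ℕ => T^[n] x)} := by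
  obtain ⟨b, hbc, hb0, hb⟩ := exists_countable_basis X
  have hdense : Dense (⋂ V ∈ b, ⋃ n : ℕ, T^[n] ⁻¹' V) := by
    refine dense_biInter_of_isOpen
      (fun V hV => isOpen_iUnion fun n => (hb.isOpen hV).preimage (hcont.iterate n)) hbc
      fun V hV => dense_iff_inter_open.2 fun U hU hUne => ?_
    obtain ⟨n, x, hxU, hxV⟩ :=
      hT U V hU (hb.isOpen hV) hUne (nonempty_iff_ne_empty.2 (ne_of_mem_of_not_mem hV hb0))
    exact ⟨x, hxU, mem_iUnion.2 ⟨n, hxV⟩⟩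
  refine hdense.mono fun x hx => hb.dense_iff.2 fun V hV _ => ?_
  obtain ⟨n, hn⟩ := mem_iUnion.1 (mem_iInter₂.1 hx V hV)
  exact ⟨_, hn, n, rfl⟩

theorem isTopologicallyTransitive_of_tendsto_iterate [AddMonoid X] [ContinuousAdd X]
    {F : Type*} [FunLike F X X] [AddHomClass F X X] (T : F) (S : X → X) {Y : Set X}
    (hY : Dense Y) (hTS : ∀ f ∈ Y, ∀ k, T (S^[k + 1] f) = S^[k] f)
    (hT : ∀ f ∈ Y, Tendsto (fun n => T^[n] f) atTop (𝓝 0))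
    (hS : ∀ f ∈ Y, Tendsto (fun n => S^[n] f) atTop (𝓝 0)) :
    IsTopologicallyTransitive T := by
  intro U V hU hV hUne hVne
  obtain ⟨f, hfU, hfY⟩ := hY.inter_open_nonempty U hU hUne
  obtain ⟨g, hgV, hgY⟩ := hY.inter_open_nonempty V hV hVne
  have hTSg : ∀ n, T^[n] (S^[n] g) = g := iterate_iterate_add_of_apply_iterate_succ (hTS g hgY) 0
  have hx : Tendsto (fun n => f + S^[n] g) atTop (𝓝 f) := by
    simpa using tendsto_const_nhds.add (hS g hgY)
  have hTx : Tendsto (fun n => T^[n] (f + S^[n] g)) atTop (𝓝 g) := by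
    simpa [iterate_map_add, hTSg] using (hT f hfY).add (tendsto_const_nhds (x := g))
  obtain ⟨n, hnU, hnV⟩ := ((hx.eventually (hU.mem_nhds hfU)).and
    (hTx.eventually (hV.mem_nhds hgV))).exists
  exact ⟨n, _, hnU, hnV⟩

end Transitivity

theorem IsTopologicallyTransitive.hypercyclicOp {𝕜 X : Type*} [NontriviallyNormedField 𝕜]
    [NormedAddCommGroup X] [NormedSpace 𝕜 X] [CompleteSpace X] [SeparableSpace X]
    [Nontrivial X] {T : X →L[𝕜] X} (hT : IsTopologicallyTransitive T) :
    HypercyclicOp T univ := by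
  have : NeBot (𝓝[≠] (0 : X)) := Module.punctured_nhds_neBot 𝕜 X 0
  obtain ⟨x, hx, hx0⟩ :=
    ((hT.dense_setOf_dense_range_iterate T.continuous).sdiff_singleton 0).nonempty
  exact ⟨x, fun _ => mem_univ _, hx0, hx⟩

section PeriodicPoints

variable {X : Type*} [NormedAddCommGroup X]

noncomputable def periodicSeries (T S : X → X) (N : ℕ) (f : X) : X :=
  ∑' j : ℕ, S^[j * N] f + ∑' j : ℕ, T^[(j + 1) * N] f

theorem norm_periodicSeries_sub_le [CompleteSpace X] {T S : X → X} {N : ℕ} {f : X}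
    {g : ℕ → ℝ} {s : ℝ} (hg : HasSum g s) (hS : ∀ j, ‖S^[(j + 1) * N] f‖ ≤ g j)
    (hT : ∀ j, ‖T^[(j + 1) * N] f‖ ≤ g j) :
    ‖periodicSeries T S N f - f‖ ≤ 2 * s := by
  have hS' : Summable fun j => S^[j * N] f :=
    (summable_nat_add_iff 1).1 (.of_norm_bounded hg.summable hS)
  have hsub : periodicSeries T S N f - f =
      ∑' j, S^[(j + 1) * N] f + ∑' j, T^[(j + 1) * N] f := by
    rw [periodicSeries, hS'.tsum_eq_zero_add, zero_mul, iterate_zero_apply]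
    abel
  rw [hsub, two_mul]
  exact (norm_add_le _ _).trans
    (add_le_add (tsum_of_norm_bounded hg hS) (tsum_of_norm_bounded hg hT))

variable {𝕜 : Type*} [NormedField 𝕜] [NormedSpace 𝕜 X]

theorem map_tsum_add_tsum_eq_self (L : X →L[𝕜] X) {a b : ℕ → X} (ha : Summable a)
    (hb : Summable b) (ha0 : L (a 0) = b 0) (ha' : ∀ j, L (a (j + 1)) = a j)
    (hb' : ∀ j, L (b j) = b (j + 1)) :
    L (∑' j, a j + ∑' j, b j) = ∑' j, a j + ∑' j, b j := by
  rw [map_add, L.map_tsum ha, L.map_tsum hb, (ha.mapL L).tsum_eq_zero_add, ha0,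
    hb.tsum_eq_zero_add]
  simp only [ha', hb']
  abel

theorem isPeriodicPt_periodicSeries (T : X →L[𝕜] X) {S : X → X} {f : X}
    (hTS : ∀ k, T (S^[k + 1] f) = S^[k] f) (N : ℕ)
    (hS : Summable fun j => S^[j * N] f) (hT : Summable fun j => T^[(j + 1) * N] f) :
    IsPeriodicPt T N (periodicSeries T S N f) := by
  have hpow : ⇑(T ^ N) = T^[N] := FunLike.coe_pow_eq_iterate T N
  refine (congrFun hpow _).symm.trans
    (map_tsum_add_tsum_eq_self _ hS hT ?_ (fun j => ?_) fun j => ?_)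
  · simp
  · rw [hpow, add_mul, one_mul, add_comm, iterate_iterate_add_of_apply_iterate_succ hTS]
  · rw [hpow, ← iterate_add_apply, add_mul (j + 1), one_mul, add_comm N]

theorem mem_closure_periodicPts_of_norm_iterate_le [CompleteSpace X] (T : X →L[𝕜] X)
    {S : X → X} {f : X} (hTS : ∀ k, T (S^[k + 1] f) = S^[k] f) {c α : ℝ} (hα0 : 0 ≤ α)
    (hα1 : α < 1) (hS : ∀ n, 0 < n → ‖S^[n] f‖ ≤ c * α ^ n)
    (hT : ∀ n, 0 < n → ‖T^[n] f‖ ≤ c * α ^ n) :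
    f ∈ closure (periodicPts T) := by
  have hperiodic : ∀ N, 0 < N → IsPeriodicPt T N (periodicSeries T S N f) ∧
      ‖periodicSeries T S N f - f‖ ≤ 2 * (c * α ^ N * (1 - α ^ N)⁻¹) := by
    intro N hN
    have hg := (hasSum_geometric_of_lt_one (pow_nonneg hα0 N)
      (pow_lt_one₀ hα0 hα1 hN.ne')).mul_left (c * α ^ N)
    have hpow : ∀ j, c * α ^ ((j + 1) * N) = c * α ^ N * (α ^ N) ^ j := fun j => by
      rw [mul_assoc, ← pow_succ', ← pow_mul, mul_comm N]
    have hS' : ∀ j, ‖S^[(j + 1) * N] f‖ ≤ c * α ^ N * (α ^ N) ^ j := fun j =>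
      hpow j ▸ hS _ (by positivity)
    have hT' : ∀ j, ‖T^[(j + 1) * N] f‖ ≤ c * α ^ N * (α ^ N) ^ j := fun j =>
      hpow j ▸ hT _ (by positivity)
    exact ⟨isPeriodicPt_periodicSeries T hTS N
      ((summable_nat_add_iff 1).1 (.of_norm_bounded hg.summable hS'))
      (.of_norm_bounded hg.summable hT'), norm_periodicSeries_sub_le hg hS' hT'⟩
  have hbound : Tendsto (fun N => 2 * (c * α ^ N * (1 - α ^ N)⁻¹)) atTop (𝓝 0) := by
    have h := tendsto_pow_atTop_nhds_zero_of_lt_one hα0 hα1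
    simpa using ((h.const_mul c).mul ((tendsto_const_nhds.sub h).inv₀ (by norm_num))).const_mul 2
  refine mem_closure_of_tendsto (f := fun N => periodicSeries T S N f)
    (tendsto_iff_norm_sub_tendsto_zero.2 (squeeze_zero' (.of_forall fun _ => norm_nonneg _)
      ((eventually_gt_atTop 0).mono fun N hN => (hperiodic N hN).2) hbound))
    ((eventually_gt_atTop 0).mono fun N hN => ⟨N, hN, (hperiodic N hN).1⟩)

theorem setOf_periodicPt_univ {X : Type*} (T : X → X) :
    {f | PeriodicPt T univ f} = periodicPts T := by
  ext f
  exact ⟨fun ⟨N, hN, _, hf⟩ => ⟨N, hN, hf⟩, fun ⟨N, hN, hf⟩ => ⟨N, hN, fun _ _ => mem_univ _, hf⟩⟩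

end PeriodicPoints

theorem chaoticity_of_inverse_general
    {𝕜 X : Type*} [RCLike 𝕜] [NormedAddCommGroup X] [NormedSpace 𝕜 X]
    [CompleteSpace X] [SeparableSpace X]
    (hinfdim : ¬ FiniteDimensional 𝕜 X)
    (D : Submodule 𝕜 X) (A : X → X)
    (Y : Set X) (hYsub : Y ⊆ opCinf A (D : Set X)) (hYdense : Dense Y)
    (B : X → X) (hBmaps : Set.MapsTo B Y Y)
    (h1 : ∀ f ∈ Y, A (B f) = f)
    (h2 : ∀ f ∈ Y, ∃ α ∈ Set.Ioo (0 : ℝ) 1, ∃ c > 0,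
      ∀ n : ℕ, 0 < n → max ‖A^[n] f‖ ‖B^[n] f‖ ≤ c * α ^ n)
    (Ainv : X →L[𝕜] X)
    (hAinv : ∀ x ∈ (D : Set X), Ainv (A x) = x) :
    ChaoticOp (⇑Ainv) (Set.univ : Set X) := by
  have hAinvA : ∀ f ∈ Y, ∀ k, Ainv (A^[k + 1] f) = A^[k] f := fun f hf k => by
    rw [iterate_succ_apply', hAinv _ (hYsub hf k)]
  have hAinvB : EqOn Ainv B Y := fun f hf => by
    simpa [h1 f hf] using hAinv (B f) (hYsub (hBmaps hf) 0)
  have hdecay : ∀ f ∈ Y, ∃ α c : ℝ, 0 ≤ α ∧ α < 1 ∧ (∀ n, 0 < n → ‖A^[n] f‖ ≤ c * α ^ n) ∧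
      ∀ n, 0 < n → ‖Ainv^[n] f‖ ≤ c * α ^ n := fun f hf => by
    obtain ⟨α, hα, c, -, hbound⟩ := h2 f hf
    refine ⟨α, c, hα.1.le, hα.2, fun n hn => (le_max_left _ _).trans (hbound n hn),
      fun n hn => ?_⟩
    rw [hAinvB.iterate hBmaps n hf]
    exact (le_max_right _ _).trans (hbound n hn)
  have : Nontrivial X := not_subsingleton_iff_nontrivial.1 fun _ => hinfdim inferInstance
  refine ⟨IsTopologicallyTransitive.hypercyclicOp <|
    isTopologicallyTransitive_of_tendsto_iterate Ainv A hYdense hAinvA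
      (fun f hf => by
        obtain ⟨α, c, hα0, hα1, -, hT⟩ := hdecay f hf
        exact tendsto_zero_of_norm_le_mul_pow hα0 hα1 hT)
      fun f hf => by
        obtain ⟨α, c, hα0, hα1, hA, -⟩ := hdecay f hf
        exact tendsto_zero_of_norm_le_mul_pow hα0 hα1 hA, ?_⟩
  rw [setOf_periodicPt_univ]
  refine (hYdense.mono fun f hf => ?_).of_closure
  obtain ⟨α, c, hα0, hα1, hA, hT⟩ := hdecay f hf
  exact mem_closure_periodicPts_of_norm_iterate_le Ainv (hAinvA f hf) hα0 hα1 hA hT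

/-- **Chaoticity of the inverse.** -/
theorem chaoticity_of_inverse
    {𝕜 X : Type*} [RCLike 𝕜] [NormedAddCommGroup X] [NormedSpace 𝕜 X]
    [CompleteSpace X] [SeparableSpace X]
    (hinfdim : ¬ FiniteDimensional 𝕜 X)
    (D : Submodule 𝕜 X) (A : X → X)
    (hlin : IsLinearOn 𝕜 A (D : Set X))
    (hdd : Dense (D : Set X))
    (hcl : ∀ n : ℕ, 0 < n → ClosedPower A (D : Set X) n)
    (Y : Set X) (hYsub : Y ⊆ opCinf A (D : Set X)) (hYdense : Dense Y)
    (B : X → X) (hBmaps : Set.MapsTo B Y Y)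
    (h1 : ∀ f ∈ Y, A (B f) = f)
    (h2 : ∀ f ∈ Y, ∃ α ∈ Set.Ioo (0 : ℝ) 1, ∃ c > 0,
      ∀ n : ℕ, 0 < n → max ‖A^[n] f‖ ‖B^[n] f‖ ≤ c * α ^ n)
    (hinj : Set.InjOn A (D : Set X))
    (hsurj : A '' (D : Set X) = Set.univ)
    (Ainv : X →L[𝕜] X)
    (hAinv : ∀ x ∈ (D : Set X), Ainv (A x) = x) :
    ChaoticOp (⇑Ainv) (Set.univ : Set X) :=
  chaoticity_of_inverse_general hinfdim D A Y hYsub hYdense B hBmaps h1 h2 Ainv hAinv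
end

section
/- Hypercyclicity of powers: Let X be a (real or complex) infinite-dimensional separable Banach space and let A be a densely defined linear operator in X such that every power A^n (n ∈ ℕ) is a closed operator, and suppose there exist a set Y ⊆ C^∞(A) dense in X and a mapping B : Y → Y such that (1) ABf = f for every f ∈ Y and (2) for every f ∈ Y, A^n f → 0 and B^n f → 0 as n → ∞. Then for every n ∈ ℕ the power A^n is hypercyclic. -/
open Filter Topology TopologicalSpace

/-!
Since the powers of `Aⁿ` are powers of `A`, it suffices to prove that `A` itself is hypercyclic,
for any `A` whose positive powers are closed. Let `(z_j)` run through a countable dense subset of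
`Y`, visiting each point infinitely often. For rapidly increasing exponents `m_j` the series
`f = ∑ⱼ B^{m_j} z_j` converges, and closedness of `A^{m_k}` lets it be applied termwise:
`A^{m_k} f = z_k + ∑_{j<k} A^{m_k - m_j} z_j + ∑_{j>k} B^{m_j - m_k} z_j`. Each error term is at
most `2^{-max(j,k)}` once every gap `m_j - m_{j-1}` exceeds the time after which `‖B^t z_j‖` and
all `‖A^t z_i‖` with `i < j` stay below `2^{-j}`, so `A^{m_k} f - z_k → 0` and the orbit of `f` is
dense.
-/

open Function Set

section Iterates

variable {X : Type*}

lemma opDom_antitone (A : X → X) (D : Set X) : Antitone (opDom A D) :=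
  fun _ _ hst _ hx k hk => hx k (hk.trans_le hst)

lemma opCinf_subset_opDom (A : X → X) (D : Set X) (n : ℕ) : opCinf A D ⊆ opDom A D n :=
  fun _ hx k _ => hx k

lemma mem_opCinf_of_forall_mem_opDom {A : X → X} {D : Set X} {m : ℕ → ℕ}
    (hm : Tendsto m atTop atTop) {x : X} (hx : ∀ k, x ∈ opDom A D (m k)) : x ∈ opCinf A D :=
  fun t => (hm.eventually_gt_atTop t).exists.elim fun k hk => hx k t hk

lemma opDom_iterate (A : X → X) (D : Set X) (n k : ℕ) :
    opDom A^[n] (opDom A D n) k = opDom A D (n * k) := by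
  ext x
  simp only [opDom, mem_ofPred_eq, ← iterate_mul, ← iterate_add_apply]
  constructor
  · intro hx l hl
    have hn : 0 < n := Nat.pos_of_ne_zero fun h => by simp [h] at hl
    simpa only [Nat.mod_add_div] using
      hx (l / n) (Nat.div_lt_of_lt_mul hl) (l % n) (Nat.mod_lt l hn)
  · intro hx j hj i hi
    exact hx _ (by nlinarith)

lemma opCinf_subset_opCinf_iterate (A : X → X) (D : Set X) (n : ℕ) :
    opCinf A D ⊆ opCinf A^[n] (opDom A D n) := by
  intro x hx k i _
  rw [← iterate_mul, ← iterate_add_apply]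
  exact hx _

lemma closedPower_iterate_iff [NormedAddCommGroup X] (A : X → X) (D : Set X) (n k : ℕ) :
    ClosedPower A^[n] (opDom A D n) k ↔ ClosedPower A D (n * k) := by
  rw [ClosedPower, ClosedPower, opDom_iterate, ← iterate_mul]

lemma Filter.Tendsto.iterate_iterate {x : X} {F : X → X} {l : Filter X}
    (h : Tendsto (fun k => F^[k] x) atTop l) {n : ℕ} (hn : 0 < n) :
    Tendsto (fun k => (F^[n])^[k] x) atTop l := by
  simpa only [← iterate_mul, smul_eq_mul, comp_def, id] using h.comp (tendsto_id.nsmul_atTop hn)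

lemma Set.LeftInvOn.iterate {T S : X → X} {Y : Set X} (h : LeftInvOn T S Y)
    (hS : MapsTo S Y Y) (k : ℕ) : LeftInvOn T^[k] S^[k] Y := by
  induction k with
  | zero => exact fun _ _ => rfl
  | succ k ih =>
    intro f hf
    rw [iterate_succ_apply' S, iterate_succ_apply T, h (hS.iterate k hf), ih hf]

lemma iterate_apply_iterate_of_le {T S : X → X} {Y : Set X} (h : LeftInvOn T S Y)
    (hS : MapsTo S Y Y) {a b : ℕ} (hab : a ≤ b) {f : X} (hf : f ∈ Y) :
    T^[a] (S^[b] f) = S^[b - a] f := by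
  rw [← Nat.add_sub_of_le hab, iterate_add_apply, Nat.add_sub_cancel_left]
  exact h.iterate hS a (hS.iterate _ hf)

lemma iterate_apply_iterate_of_ge {T S : X → X} {Y : Set X} (h : LeftInvOn T S Y)
    (hS : MapsTo S Y Y) {a b : ℕ} (hba : b ≤ a) {f : X} (hf : f ∈ Y) :
    T^[a] (S^[b] f) = T^[a - b] f := by
  rw [← Nat.sub_add_cancel hba, iterate_add_apply, Nat.add_sub_cancel, h.iterate hS b hf]

end Iterates

section Additive

variable {X : Type*} [AddCommGroup X] {T : X → X} {E : AddSubmonoid X}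

def IsAdditiveOn (T : X → X) (E : Set X) : Prop :=
  ∀ x ∈ E, ∀ y ∈ E, T (x + y) = T x + T y

lemma IsAdditiveOn.map_zero (hT : IsAdditiveOn T E) : T 0 = 0 := by
  simpa using hT 0 E.zero_mem 0 E.zero_mem

lemma IsAdditiveOn.iterate (hT : IsAdditiveOn T E) (k : ℕ) :
    IsAdditiveOn T^[k] (opDom T E k) := by
  induction k with
  | zero => exact fun _ _ _ _ => rfl
  | succ k ih =>
    intro x hx y hy
    simp only [iterate_succ_apply']
    rw [ih x (opDom_antitone T E k.le_succ hx) y (opDom_antitone T E k.le_succ hy)]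
    exact hT _ (hx k k.lt_succ_self) _ (hy k k.lt_succ_self)

def opDomAddSubmonoid (hT : IsAdditiveOn T E) (k : ℕ) : AddSubmonoid X where
  carrier := opDom T E k
  zero_mem' j _ := by
    rw [iterate_fixed hT.map_zero]
    exact E.zero_mem
  add_mem' {x y} hx hy j hj := by
    rw [hT.iterate j x (opDom_antitone T E hj.le hx) y (opDom_antitone T E hj.le hy)]
    exact E.add_mem (hx j hj) (hy j hj)

lemma IsAdditiveOn.sum_mem_opDom (hT : IsAdditiveOn T E) {g : ℕ → X}
    (hg : ∀ j, g j ∈ opCinf T E) (k p : ℕ) : ∑ j ∈ Finset.range p, g j ∈ opDom T E k :=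
  AddSubmonoid.sum_mem (opDomAddSubmonoid hT k) fun j _ => opCinf_subset_opDom T E k (hg j)

lemma IsAdditiveOn.iterate_sum (hT : IsAdditiveOn T E) {g : ℕ → X}
    (hg : ∀ j, g j ∈ opCinf T E) (k p : ℕ) :
    T^[k] (∑ j ∈ Finset.range p, g j) = ∑ j ∈ Finset.range p, T^[k] (g j) := by
  induction p with
  | zero => exact iterate_fixed hT.map_zero k
  | succ p ih =>
    rw [Finset.sum_range_succ, Finset.sum_range_succ,
      hT.iterate k _ (hT.sum_mem_opDom hg k p) _ (opCinf_subset_opDom T E k (hg p)), ih]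

end Additive

section Criterion

variable {X : Type*} [NormedAddCommGroup X]

lemma ClosedPower.mem_opDom_of_hasSum {T : X → X} {E : AddSubmonoid X} {k : ℕ}
    (hcl : ClosedPower T E k) (hT : IsAdditiveOn T E) {g : ℕ → X}
    (hg : ∀ j, g j ∈ opCinf T E) {f w : X} (hf : HasSum g f)
    (hw : HasSum (fun j => T^[k] (g j)) w) : f ∈ opDom T E k ∧ T^[k] f = w := by
  have hpartial : ∀ p, (∑ j ∈ Finset.range p, g j, ∑ j ∈ Finset.range p, T^[k] (g j)) ∈
      {q : X × X | q.1 ∈ opDom T E k ∧ q.2 = T^[k] q.1} := fun p =>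
    ⟨hT.sum_mem_opDom hg k p, (hT.iterate_sum hg k p).symm⟩
  obtain ⟨hfk, hwf⟩ := hcl.mem_of_tendsto
    (hf.tendsto_sum_nat.prodMk_nhds hw.tendsto_sum_nat) (Eventually.of_forall hpartial)
  exact ⟨hfk, hwf.symm⟩

lemma exists_forall_ge_norm_le_half_pow (u v : ℕ → ℕ → X)
    (hu : ∀ j, Tendsto (u j) atTop (𝓝 0)) (hv : ∀ j, Tendsto (v j) atTop (𝓝 0)) :
    ∃ N : ℕ → ℕ, ∀ j, 1 ≤ N j ∧
      ∀ t ≥ N j, ‖v j t‖ ≤ (1 / 2 : ℝ) ^ j ∧ ∀ i < j, ‖u i t‖ ≤ (1 / 2 : ℝ) ^ j := by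
  have hev : ∀ j, ∀ᶠ t in atTop, 1 ≤ t ∧
      ‖v j t‖ ≤ (1 / 2 : ℝ) ^ j ∧ ∀ i < j, ‖u i t‖ ≤ (1 / 2 : ℝ) ^ j := by
    intro j
    have hsmall : ∀ w : ℕ → X, Tendsto w atTop (𝓝 0) → ∀ᶠ t in atTop, ‖w t‖ ≤ (1 / 2 : ℝ) ^ j :=
      fun w hw => (hw.eventually_mem (Metric.closedBall_mem_nhds 0 (by positivity))).mono
        fun _ => mem_closedBall_zero_iff.1
    exact (eventually_ge_atTop 1).and ((hsmall _ (hv j)).and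
      ((Set.finite_lt_nat j).eventually_all.2 fun i _ => hsmall _ (hu i)))
  choose N hN using fun j => eventually_atTop.1 (hev j)
  exact ⟨N, fun j => ⟨(hN j _ le_rfl).1, fun t ht => (hN j t ht).2⟩⟩

lemma summable_of_norm_offDiag_le [CompleteSpace X] {a : ℕ → ℕ → X}
    (ha : ∀ k j, j ≠ k → ‖a k j‖ ≤ (1 / 2 : ℝ) ^ max j k) (k : ℕ) : Summable (a k) := by
  refine Summable.of_norm_bounded_eventually_nat summable_geometric_two ?_
  filter_upwards [eventually_gt_atTop k] with j hj
  simpa [max_eq_left hj.le] using ha k j hj.ne'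

lemma tendsto_tsum_sub_diag_of_norm_offDiag_le [CompleteSpace X] {a : ℕ → ℕ → X}
    (ha : ∀ k j, j ≠ k → ‖a k j‖ ≤ (1 / 2 : ℝ) ^ max j k) :
    Tendsto (fun k => ∑' j, a k j - a k k) atTop (𝓝 0) := by
  have hoff : ∀ k, ∑' j, a k j - a k k = ∑' j, if j = k then 0 else a k j := fun k => by
    rw [(summable_of_norm_offDiag_le ha k).tsum_eq_add_tsum_ite k, add_sub_cancel_left]
  have hpointwise : ∀ j, Tendsto (fun k => if j = k then 0 else a k j) atTop (𝓝 0) := by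
    intro j
    refine squeeze_zero_norm' ?_ (tendsto_pow_atTop_nhds_zero_of_lt_one
      (by norm_num : (0 : ℝ) ≤ 1 / 2) (by norm_num))
    filter_upwards [eventually_gt_atTop j] with k hk
    simpa [hk.ne, max_eq_right hk.le] using ha k j hk.ne
  have hbound : ∀ k j, ‖if j = k then 0 else a k j‖ ≤ (1 / 2 : ℝ) ^ j := by
    intro k j
    split_ifs with hjk
    · simp
    · exact (ha k j hjk).trans (pow_le_pow_of_le_one (by norm_num) (by norm_num) (le_max_left j k))
  simpa [hoff] using tendsto_tsum_of_dominated_convergence (g := fun _ => (0 : X))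
    summable_geometric_two hpointwise (Eventually.of_forall hbound)

lemma norm_iterate_apply_iterate_le {T S : X → X} {Y : Set X} (hST : LeftInvOn T S Y)
    (hS : MapsTo S Y Y) {z : ℕ → X} (hz : ∀ j, z j ∈ Y) {N m : ℕ → ℕ}
    (hN : ∀ j, ∀ t ≥ N j,
      ‖S^[t] (z j)‖ ≤ (1 / 2 : ℝ) ^ j ∧ ∀ i < j, ‖T^[t] (z i)‖ ≤ (1 / 2 : ℝ) ^ j)
    (hm : ∀ i j, i < j → m i + N j ≤ m j) {j k : ℕ} (hjk : j ≠ k) :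
    ‖T^[m k] (S^[m j] (z j))‖ ≤ (1 / 2 : ℝ) ^ max j k := by
  rcases hjk.lt_or_gt with hlt | hgt
  · have hgap := hm j k hlt
    rw [max_eq_right hlt.le, iterate_apply_iterate_of_ge hST hS (by omega) (hz j)]
    exact (hN k _ (by omega)).2 j hlt
  · have hgap := hm k j hgt
    rw [max_eq_left hgt.le, iterate_apply_iterate_of_le hST hS (by omega) (hz j)]
    exact (hN j _ (by omega)).1

lemma exists_iterate_sub_tendsto_zero [CompleteSpace X] {T S : X → X} {E : AddSubmonoid X}
    {Y : Set X} (hT : IsAdditiveOn T E) (hcl : ∀ k, 0 < k → ClosedPower T E k)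
    (hY : Y ⊆ opCinf T E) (hS : MapsTo S Y Y) (hST : LeftInvOn T S Y)
    (hT0 : ∀ f ∈ Y, Tendsto (fun t => T^[t] f) atTop (𝓝 0))
    (hS0 : ∀ f ∈ Y, Tendsto (fun t => S^[t] f) atTop (𝓝 0)) {z : ℕ → X} (hz : ∀ j, z j ∈ Y) :
    ∃ f ∈ opCinf T E, ∃ m : ℕ → ℕ, Tendsto (fun k => T^[m k] f - z k) atTop (𝓝 0) := by
  obtain ⟨N, hN⟩ := exists_forall_ge_norm_le_half_pow (fun j t => T^[t] (z j))
    (fun j t => S^[t] (z j)) (fun j => hT0 _ (hz j)) (fun j => hS0 _ (hz j))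
  set m : ℕ → ℕ := fun j => ∑ i ∈ Finset.range (j + 1), N i
  have hmN : ∀ j, N j ≤ m j := fun j =>
    Finset.single_le_sum (fun _ _ => Nat.zero_le _) (Finset.self_mem_range_succ j)
  have hm : ∀ i j, i < j → m i + N j ≤ m j := fun i j hij => by
    have hle : m i ≤ ∑ l ∈ Finset.range j, N l :=
      Finset.sum_le_sum_of_subset (Finset.range_subset_range.2 hij)
    simpa [m, Finset.sum_range_succ] using hle
  have hmono : StrictMono m := strictMono_nat_of_lt_succ fun j => by
    have := hm j (j + 1) j.lt_succ_self
    have := (hN (j + 1)).1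
    omega
  set g : ℕ → X := fun j => S^[m j] (z j)
  have hg : Summable g := .of_norm_bounded summable_geometric_two fun j => ((hN j).2 _ (hmN j)).1
  set a : ℕ → ℕ → X := fun k j => T^[m k] (g j)
  have ha : ∀ k j, j ≠ k → ‖a k j‖ ≤ (1 / 2 : ℝ) ^ max j k := fun k j =>
    norm_iterate_apply_iterate_le hST hS hz (fun j => (hN j).2) hm
  have hf : ∀ k, ∑' j, g j ∈ opDom T E (m k) ∧ T^[m k] (∑' j, g j) = ∑' j, a k j := fun k =>
    (hcl _ ((hN k).1.trans (hmN k))).mem_opDom_of_hasSum hT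
      (fun j => hY (hS.iterate _ (hz j))) hg.hasSum (summable_of_norm_offDiag_le ha k).hasSum
  have hdiag : ∀ k, a k k = z k := fun k => hST.iterate hS (m k) (hz k)
  refine ⟨∑' j, g j, mem_opCinf_of_forall_mem_opDom hmono.tendsto_atTop fun k => (hf k).1, m, ?_⟩
  simpa only [(hf _).2, hdiag] using tendsto_tsum_sub_diag_of_norm_offDiag_le ha

end Criterion

lemma exists_seq_mem_forall_mapClusterPt {X : Type*} [TopologicalSpace X] [Nonempty X]
    {Y : Set X} [SeparableSpace Y] (hY : Dense Y) :
    ∃ z : ℕ → X, (∀ k, z k ∈ Y) ∧ ∀ x, MapClusterPt x atTop z := by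
  obtain ⟨s, hsY, hsc, hsd⟩ := hY.exists_countable_dense_subset
  obtain ⟨u, rfl⟩ := hsc.exists_eq_range hsd.nonempty
  refine ⟨fun k => u k.unpair.1, fun k => hsY (mem_range_self _), fun x => ?_⟩
  refine mapClusterPt_iff_frequently.2 fun s hs => frequently_atTop.2 fun K => ?_
  obtain ⟨_, hus, i, rfl⟩ := mem_closure_iff_nhds.1 (hsd x) s hs
  exact ⟨Nat.pair i K, Nat.right_le_pair i K, by simpa [Nat.unpair_pair] using hus⟩

lemma dense_range_of_tendsto_sub {X : Type*} [SeminormedAddCommGroup X] {v z : ℕ → X}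
    (hz : ∀ x, MapClusterPt x atTop z) (h : Tendsto (fun k => v k - z k) atTop (𝓝 0)) :
    Dense (range v) := by
  refine Metric.dense_iff.2 fun x r hr => ?_
  obtain ⟨k, hzk, hvk⟩ := ((mapClusterPt_iff_frequently.1 (hz x) _
    (Metric.ball_mem_nhds x (half_pos hr))).and_eventually
    (h.eventually (Metric.ball_mem_nhds 0 (half_pos hr)))).exists
  refine ⟨v k, ?_, mem_range_self k⟩
  rw [Metric.mem_ball] at hzk ⊢
  rw [dist_zero_right] at hvk
  calc dist (v k) x ≤ dist (v k) (z k) + dist (z k) x := dist_triangle _ _ _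
    _ < r / 2 + r / 2 := by rw [dist_eq_norm]; gcongr
    _ = r := add_halves r

theorem hypercyclicOp_of_leftInvOn {X : Type*} [NormedAddCommGroup X] [CompleteSpace X]
    [SeparableSpace X] [Nontrivial X] {T S : X → X} {E : AddSubmonoid X} {Y : Set X}
    (hT : IsAdditiveOn T E) (hcl : ∀ k, 0 < k → ClosedPower T E k)
    (hY : Y ⊆ opCinf T E) (hYd : Dense Y) (hS : MapsTo S Y Y) (hST : LeftInvOn T S Y)
    (hT0 : ∀ f ∈ Y, Tendsto (fun t => T^[t] f) atTop (𝓝 0))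
    (hS0 : ∀ f ∈ Y, Tendsto (fun t => S^[t] f) atTop (𝓝 0)) : HypercyclicOp T E := by
  obtain ⟨z, hzY, hz⟩ := exists_seq_mem_forall_mapClusterPt hYd
  obtain ⟨f, hf, m, hm⟩ := exists_iterate_sub_tendsto_zero hT hcl hY hS hST hT0 hS0 hzY
  have hdense : Dense (range fun n => T^[n] f) :=
    (dense_range_of_tendsto_sub hz hm).mono (range_comp_subset_range m _)
  refine ⟨f, hf, ?_, hdense⟩
  rintro rfl
  obtain ⟨x, hx⟩ := exists_ne (0 : X)
  have horbit : (range fun n => T^[n] (0 : X)) = {0} := by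
    simp [iterate_fixed hT.map_zero]
  rw [horbit, dense_iff_closure_eq, closure_singleton, eq_univ_iff_forall] at hdense
  exact hx (hdense x)

theorem hypercyclicity_of_powers_general
    {𝕜 X : Type*} [RCLike 𝕜] [NormedAddCommGroup X] [NormedSpace 𝕜 X]
    [CompleteSpace X] [SeparableSpace X]
    (hinfdim : ¬ FiniteDimensional 𝕜 X)
    (D : Submodule 𝕜 X) (A : X → X)
    (hlin : IsLinearOn 𝕜 A (D : Set X))
    (hcl : ∀ n : ℕ, 0 < n → ClosedPower A (D : Set X) n)
    (Y : Set X) (hYsub : Y ⊆ opCinf A (D : Set X)) (hYdense : Dense Y)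
    (B : X → X) (hBmaps : Set.MapsTo B Y Y)
    (h1 : ∀ f ∈ Y, A (B f) = f)
    (h2 : ∀ f ∈ Y, Filter.Tendsto (fun n : ℕ => A^[n] f) Filter.atTop (nhds 0) ∧
      Filter.Tendsto (fun n : ℕ => B^[n] f) Filter.atTop (nhds 0))
    :
    ∀ n : ℕ, 0 < n → HypercyclicOp (A^[n]) (opDom A (D : Set X) n) := by
  intro n hn
  have : Nontrivial X := not_subsingleton_iff_nontrivial.1 fun _ => hinfdim inferInstance
  have hA : IsAdditiveOn A D.toAddSubmonoid := hlin.1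
  exact hypercyclicOp_of_leftInvOn (E := opDomAddSubmonoid hA n) (hA.iterate n)
    (fun k hk => (closedPower_iterate_iff A D n k).2 (hcl _ (Nat.mul_pos hn hk)))
    (hYsub.trans (opCinf_subset_opCinf_iterate A D n)) hYdense (hBmaps.iterate n)
    (LeftInvOn.iterate h1 hBmaps n) (fun f hf => (h2 f hf).1.iterate_iterate hn)
    (fun f hf => (h2 f hf).2.iterate_iterate hn)

/-- **Hypercyclicity of powers.** -/
theorem hypercyclicity_of_powers
    {𝕜 X : Type*} [RCLike 𝕜] [NormedAddCommGroup X] [NormedSpace 𝕜 X]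
    [CompleteSpace X] [SeparableSpace X]
    (hinfdim : ¬ FiniteDimensional 𝕜 X)
    (D : Submodule 𝕜 X) (A : X → X)
    (hlin : IsLinearOn 𝕜 A (D : Set X))
    (hdd : Dense (D : Set X))
    (hcl : ∀ n : ℕ, 0 < n → ClosedPower A (D : Set X) n)
    (Y : Set X) (hYsub : Y ⊆ opCinf A (D : Set X)) (hYdense : Dense Y)
    (B : X → X) (hBmaps : Set.MapsTo B Y Y)
    (h1 : ∀ f ∈ Y, A (B f) = f)
    (h2 : ∀ f ∈ Y, Filter.Tendsto (fun n : ℕ => A^[n] f) Filter.atTop (nhds 0) ∧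
      Filter.Tendsto (fun n : ℕ => B^[n] f) Filter.atTop (nhds 0))
    :
    ∀ n : ℕ, 0 < n → HypercyclicOp (A^[n]) (opDom A (D : Set X) n) :=
  hypercyclicity_of_powers_general hinfdim D A hlin hcl Y hYsub hYdense B hBmaps h1 h2
end
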